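/- arXiv:1111.6431 — 2 statements merged into one kernel-verified Lean document; each statement's English description precedes it below -/
import Mathlib

section
/- If w ∈ Σ* contains a factor u = a·x·u'·b with u' ∈ (Σ\{a})* and a disjoint (non-overlapping) factor v = a·v'·b with v' ∈ (Σ\{x})*, where both occur in w without overlap, then w is not uniquely decodable: swapping the blocks u and v yields a string with the same bigram counts. -/
variable {α : Type*}

/-- The `$`-delimited version of a string over `α`; `none` plays the role of `$`. -/
def delim (w : List α) : List (Option α) :=
  none :: (w.map some ++ [none])

/-- The bigram count vector of `$w$`, as the multiset of adjacent ordered pairs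
(multiset equality is the same as equality of all bigram counts). -/
def bigrams (w : List α) : Multiset (Option α × Option α) :=
  ((delim w).zip (delim w).tail : List (Option α × Option α))

/-- A string is uniquely decodable if `$w$` is the only delimited string with its
bigram count vector. -/
def UniqDec (w : List α) : Prop :=
  ∀ v : List α, bigrams v = bigrams w → v = w

/-!
The bigram multiset of a string splits at any position into the bigrams of the two pieces,
with the symbol at the cut belonging to both. Cutting `p·u·m·v·s` just inside the first and
last symbols of `u` and `v` writes its bigrams as a sum of five terms; when `u` and `v` begin
with the same symbol `a` and end with the same symbol `b`, exchanging them only permutes the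
summands. The strings differ because the second symbol of `u` is `x`, which cannot occur at
that position in `v` when `x ∉ v'` and `b ≠ x`.
-/

def adjPairs {β : Type*} (l : List β) : Multiset (β × β) := (l.zip l.tail : List (β × β))

section adjPairs

variable {β : Type*}

theorem adjPairs_append_cons (l₁ l₂ : List β) (c : β) :
    adjPairs (l₁ ++ c :: l₂) = adjPairs (l₁ ++ [c]) + adjPairs (c :: l₂) := by
  induction l₁ with
  | nil => simp [adjPairs]
  | cons e t ih =>
    cases t with
    | nil => simp [adjPairs]
    | cons f t =>
      change (e, f) ::ₘ adjPairs (f :: t ++ c :: l₂) = (e, f) ::ₘ adjPairs (f :: t ++ [c]) + _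
      rw [ih, Multiset.cons_add]

theorem adjPairs_cons_append_cons (c d : β) (l₁ l₂ : List β) :
    adjPairs (c :: (l₁ ++ d :: l₂)) = adjPairs (c :: l₁ ++ [d]) + adjPairs (d :: l₂) :=
  adjPairs_append_cons (c :: l₁) l₂ d

theorem adjPairs_cut_blocks (p X m Y s : List β) (c d : β) :
    adjPairs (p ++ c :: X ++ d :: m ++ c :: Y ++ d :: s) =
      adjPairs (p ++ [c]) + adjPairs (c :: X ++ [d]) + adjPairs (d :: m ++ [c]) +
        adjPairs (c :: Y ++ [d]) + adjPairs (d :: s) := by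
  conv_lhs => simp only [List.cons_append, List.append_assoc]
  rw [adjPairs_append_cons p, adjPairs_cons_append_cons, adjPairs_cons_append_cons,
    adjPairs_cons_append_cons, add_assoc, add_assoc, add_assoc]

theorem adjPairs_swap_blocks (p X m Y s : List β) (c d : β) :
    adjPairs (p ++ c :: X ++ d :: m ++ c :: Y ++ d :: s) =
      adjPairs (p ++ c :: Y ++ d :: m ++ c :: X ++ d :: s) := by
  rw [adjPairs_cut_blocks, adjPairs_cut_blocks]
  abel

end adjPairs

theorem bigrams_swap_blocks (p X m Y s : List α) (a b : α) :
    bigrams (p ++ ([a] ++ X ++ [b]) ++ m ++ ([a] ++ Y ++ [b]) ++ s) =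
      bigrams (p ++ ([a] ++ Y ++ [b]) ++ m ++ ([a] ++ X ++ [b]) ++ s) := by
  have h := adjPairs_swap_blocks (none :: p.map some) (X.map some) (m.map some) (Y.map some)
    (s.map some ++ [none]) (some a) (some b)
  simpa [adjPairs, bigrams, delim] using h

theorem List.append_cons_ne_cons_of_not_mem {β : Type*} {x b : β} {l : List β} (hx : x ∉ l)
    (hbx : b ≠ x) (t t' : List β) : l ++ b :: t ≠ x :: t' := by
  cases l with
  | nil => simp [hbx]
  | cons c l => simp_all [eq_comm]

theorem stmt3_general (x a b : α) (hbx : b ≠ x)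
    (u' v' p m s : List α) (hv' : x ∉ v') :
    bigrams (p ++ ([a] ++ v' ++ [b]) ++ m ++ ([a, x] ++ u' ++ [b]) ++ s) =
      bigrams (p ++ ([a, x] ++ u' ++ [b]) ++ m ++ ([a] ++ v' ++ [b]) ++ s) ∧
    (p ++ ([a] ++ v' ++ [b]) ++ m ++ ([a, x] ++ u' ++ [b]) ++ s) ≠
      (p ++ ([a, x] ++ u' ++ [b]) ++ m ++ ([a] ++ v' ++ [b]) ++ s) ∧
    ¬ UniqDec (p ++ ([a, x] ++ u' ++ [b]) ++ m ++ ([a] ++ v' ++ [b]) ++ s) := by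
  have hbig := bigrams_swap_blocks p v' m (x :: u') s a b
  have hne : (p ++ ([a] ++ v' ++ [b]) ++ m ++ ([a, x] ++ u' ++ [b]) ++ s) ≠
      (p ++ ([a, x] ++ u' ++ [b]) ++ m ++ ([a] ++ v' ++ [b]) ++ s) := by
    intro h
    simp only [List.append_assoc, List.cons_append, List.nil_append, List.append_cancel_left_eq,
      List.cons.injEq, true_and] at h
    exact List.append_cons_ne_cons_of_not_mem hv' hbx _ _ h
  exact ⟨hbig, hne, fun hud => hne (hud _ hbig)⟩

/-- If `w = α·u·β·v·γ` with non-overlapping factors `u = a·x·u'·b` (`a ∉ u'`) and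
`v = a·v'·b` (`x ∉ v'`), then swapping `u` and `v` gives a different string with the
same bigram counts, so `w` is not uniquely decodable. -/
theorem stmt3 (x a b : α) (hax : a ≠ x) (hbx : b ≠ x)
    (u' v' p m s : List α) (hu' : a ∉ u') (hv' : x ∉ v') :
    bigrams (p ++ ([a] ++ v' ++ [b]) ++ m ++ ([a, x] ++ u' ++ [b]) ++ s) =
      bigrams (p ++ ([a, x] ++ u' ++ [b]) ++ m ++ ([a] ++ v' ++ [b]) ++ s) ∧
    (p ++ ([a] ++ v' ++ [b]) ++ m ++ ([a, x] ++ u' ++ [b]) ++ s) ≠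
      (p ++ ([a, x] ++ u' ++ [b]) ++ m ++ ([a] ++ v' ++ [b]) ++ s) ∧
    ¬ UniqDec (p ++ ([a, x] ++ u' ++ [b]) ++ m ++ ([a] ++ v' ++ [b]) ++ s) :=
  stmt3_general x a b hbx u' v' p m s hv'
end

section
/- Every string over Σ whose letters appear in strictly increasing order (with respect to a fixed linear order on Σ, no repetitions) is uniquely decodable from its bigram counts. -/
/-!
If `w` has no repeated letter, then in `$w$` every symbol, `$` included, is the first component
of at most one bigram, so the bigrams of `w` form the graph of a partial successor function.
A string `v` with the same bigram multiset has `$v$` of the same length, starting with `$` and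
following only these edges, hence `$v$ = $w$`.
-/

variable {α : Type*}

namespace List

variable {β : Type*}

theorem map_fst_zip_tail : ∀ l : List β, (l.zip l.tail).map Prod.fst = l.dropLast
  | [] | [_] => rfl
  | a :: b :: t => congrArg (a :: ·) (map_fst_zip_tail (b :: t))

theorem isChain_mem_zip_tail : ∀ l : List β, l.IsChain fun a b => (a, b) ∈ l.zip l.tail
  | [] | [_] => by simp
  | a :: b :: t =>
    isChain_cons_cons.mpr ⟨by simp, (isChain_mem_zip_tail (b :: t)).imp fun x y hxy => by
      simp_all⟩

theorem eq_of_mem_zip_tail_of_nodup_dropLast {l : List β} (hl : l.dropLast.Nodup) (a b c : β)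
    (hb : (a, b) ∈ l.zip l.tail) (hc : (a, c) ∈ l.zip l.tail) : b = c := by
  rw [← map_fst_zip_tail] at hl
  exact (Prod.mk.inj (inj_on_of_nodup_map hl hb hc rfl)).2

theorem IsChain.eq_of_head?_eq_of_length_eq {R : β → β → Prop}
    (hR : ∀ a b c, R a b → R a c → b = c) :
    ∀ {l₁ l₂ : List β}, l₁.IsChain R → l₂.IsChain R → l₁.head? = l₂.head? →
      l₁.length = l₂.length → l₁ = l₂
  | [], [], _, _, _, _ => rfl
  | [_], [_], _, _, hhead, _ => by simpa using hhead
  | a :: b :: t, a' :: b' :: t', h₁, h₂, hhead, hlen => by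
    obtain rfl : a = a' := by simpa using hhead
    rw [isChain_cons_cons] at h₁ h₂
    obtain rfl : b = b' := hR a b b' h₁.1 h₂.1
    rw [IsChain.eq_of_head?_eq_of_length_eq hR h₁.2 h₂.2 rfl (by simpa using hlen)]
  | [], _ :: _, _, _, _, hlen | _ :: _, [], _, _, _, hlen
  | [_], _ :: _ :: _, _, _, _, hlen | _ :: _ :: _, [_], _, _, _, hlen => by simp at hlen

end List

theorem card_bigrams (w : List α) : Multiset.card (bigrams w) = w.length + 1 := by
  simp [bigrams, delim]

theorem delim_injective : Function.Injective (delim : List α → List (Option α)) := by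
  intro v w h
  apply List.map_injective_iff.mpr (Option.some_injective α)
  simpa [delim] using h

theorem uniqDec_of_nodup {w : List α} (hw : w.Nodup) : UniqDec w := by
  intro v hvw
  have hfirst : (delim w).dropLast.Nodup := by
    rw [delim, ← List.cons_append, List.dropLast_concat]
    exact List.nodup_cons.mpr ⟨by simp, hw.map (Option.some_injective α)⟩
  have hchain (u : List α) (hu : bigrams u = bigrams w) :
      (delim u).IsChain fun a b => (a, b) ∈ (delim w).zip (delim w).tail :=
    (List.isChain_mem_zip_tail (delim u)).imp fun a b hab =>
      Multiset.mem_coe.mp (hu ▸ Multiset.mem_coe.mpr hab : (a, b) ∈ bigrams w)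
  have hlen : v.length = w.length := by
    simpa [card_bigrams] using congrArg Multiset.card hvw
  exact delim_injective (List.IsChain.eq_of_head?_eq_of_length_eq
    (List.eq_of_mem_zip_tail_of_nodup_dropLast hfirst)
    (hchain v hvw) (hchain w rfl) rfl (by simp [delim, hlen]))

/-- Every strictly increasing string over a linearly ordered alphabet is uniquely
decodable from its bigram counts. -/
theorem stmt12 {α : Type*} [LinearOrder α] (w : List α)
    (hw : w.Chain' (· < ·)) : UniqDec w :=
  uniqDec_of_nodup (List.isChain_iff_pairwise.mp hw).nodup
end
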